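/- Let (Ω, F, P) be a probability space and let A : Ω → Matrix(Fin m, Fin n, ℂ), y : Ω → (Fin m → ℂ), and x : Ω → (Fin n → ℂ) be mutually independent random objects whose entries are square-integrable. Assume additionally that the columns a_1, …, a_n of A are mutually independent random vectors. Write ⟨A⟩, ⟨y⟩, ⟨x⟩ for the entrywise expectations, Σ_{a_i} = E[(a_i − ⟨a_i⟩)(a_i − ⟨a_i⟩)^H], Σ_y = E[(y − ⟨y⟩)(y − ⟨y⟩)^H], Σ_x = E[(x − ⟨x⟩)(x − ⟨x⟩)^H]. Let B be an m×m Hermitian complex matrix and set D = diag(Tr(B Σ_{a_1}), …, Tr(B Σ_{a_n})). Then E[(y − A x)^H B (y − A x)] = (⟨y⟩ − ⟨A⟩⟨x⟩)^H B (⟨y⟩ − ⟨A⟩⟨x⟩) + Tr(B Σ_y) + ⟨x⟩^H D ⟨x⟩ + Tr(Σ_x D) + Tr(Σ_x ⟨A⟩^H B ⟨A⟩). -/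

import Mathlib

open MeasureTheory ProbabilityTheory Matrix

/-- Matrices inherit the product measurable structure of `m → n → α`. -/
instance matrixMeasurableSpace {m n α : Type*} [MeasurableSpace α] :
    MeasurableSpace (Matrix m n α) :=
  inferInstanceAs (MeasurableSpace (m → n → α))

/-!
For `r = y - A x` one has `E[rᴴ B r] = Tr (B E[r rᴴ])`, so it suffices to compute the second
moment matrix of the residual. As `y` is independent of `(A, x)`, the cross terms of `E[r rᴴ]`
are products of means, and `E[A x] = ⟨A⟩⟨x⟩` since `A` and `x` are independent. The same
independence gives `E[(A x)_p conj (A x)_q] = ∑ i j, E[A_pi conj A_qj] E[x_i conj x_j]`, and by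
independence of the columns `E[A_pi conj A_qj] = ⟨A⟩_pi conj ⟨A⟩_qj` unless `i = j`, where
`(Σ_{a_i})_pq` is added. Hence `E[r rᴴ] = c cᴴ + Σ_y + ⟨A⟩ Σ_x ⟨A⟩ᴴ + ∑ i, E|x_i|² Σ_{a_i}`
with `c = ⟨y⟩ - ⟨A⟩⟨x⟩`, and multiplying by `B` and taking the trace gives the five terms.
-/

universe u

section

variable {Ω 𝕜 ι κ : Type*} [MeasurableSpace Ω] [RCLike 𝕜] {μ : Measure Ω}

/- Packaging the three σ-algebras as a dependent family of random variables makes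
`iIndepFun.indepFun_prodMk₀` available, which only needs a.e.-measurability. -/
lemma indepFun_prodMk_of_iIndep_comap {β₁ β₂ β₃ : Type u} [m₁ : MeasurableSpace β₁]
    [m₂ : MeasurableSpace β₂] [m₃ : MeasurableSpace β₃] {f₁ : Ω → β₁} {f₂ : Ω → β₂} {f₃ : Ω → β₃}
    (h : iIndep ![m₁.comap f₁, m₂.comap f₂, m₃.comap f₃] μ)
    (h₁ : AEMeasurable f₁ μ) (h₂ : AEMeasurable f₂ μ) (h₃ : AEMeasurable f₃ μ) :
    IndepFun (fun ω => (f₁ ω, f₃ ω)) f₂ μ := by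
  let β : Fin 3 → Type u := ![β₁, β₂, β₃]
  let mβ : ∀ i, MeasurableSpace (β i) := Fin.cases m₁ (Fin.cases m₂ (Fin.cases m₃ finZeroElim))
  let f : ∀ i, Ω → β i := Fin.cases f₁ (Fin.cases f₂ (Fin.cases f₃ finZeroElim))
  have hf : iIndepFun f μ := by
    have hm : (fun i => (mβ i).comap (f i)) = ![m₁.comap f₁, m₂.comap f₂, m₃.comap f₃] := by
      funext i
      fin_cases i <;> rfl
    rw [iIndepFun_iff_iIndep, hm]
    exact h
  exact hf.indepFun_prodMk₀ (by intro i; fin_cases i <;> assumption) 0 2 1 (by decide) (by decide)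

lemma integral_star (f : Ω → 𝕜) : ∫ ω, star (f ω) ∂μ = star (∫ ω, f ω ∂μ) :=
  integral_conj

lemma MeasureTheory.MemLp.integrable_mul_star {f g : Ω → 𝕜} (hf : MemLp f 2 μ)
    (hg : MemLp g 2 μ) : Integrable (fun ω => f ω * star (g ω)) μ :=
  hf.integrable_mul hg.star

lemma ProbabilityTheory.IndepFun.memLp_two_mul {f g : Ω → 𝕜} (hfg : IndepFun f g μ)
    (hf : MemLp f 2 μ) (hg : MemLp g 2 μ) : MemLp (fun ω => f ω * g ω) 2 μ := by
  refine (memLp_two_iff_integrable_sq_norm (hf.1.mul hg.1)).2 ?_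
  have hsq : IndepFun (fun ω => ‖f ω‖ ^ 2) (fun ω => ‖g ω‖ ^ 2) μ :=
    hfg.comp (φ := fun z => ‖z‖ ^ 2) (ψ := fun z => ‖z‖ ^ 2) (by fun_prop) (by fun_prop)
  convert hsq.integrable_mul ((memLp_two_iff_integrable_sq_norm hf.1).1 hf)
    ((memLp_two_iff_integrable_sq_norm hg.1).1 hg) using 2 with ω
  simp only [norm_mul, mul_pow, Pi.mul_apply]

lemma ProbabilityTheory.IndepFun.integral_mul_star {f g : Ω → 𝕜} (hfg : IndepFun f g μ)
    (hf : AEStronglyMeasurable f μ) (hg : AEStronglyMeasurable g μ) :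
    ∫ ω, f ω * star (g ω) ∂μ = (∫ ω, f ω ∂μ) * star (∫ ω, g ω ∂μ) := by
  rw [← integral_star]
  exact (hfg.comp measurable_id continuous_star.measurable).integral_fun_mul_eq_mul_integral
    hf hg.star

lemma integral_sub_mul_star_sub {f₁ f₂ g₁ g₂ : Ω → 𝕜} (hf₁ : MemLp f₁ 2 μ) (hf₂ : MemLp f₂ 2 μ)
    (hg₁ : MemLp g₁ 2 μ) (hg₂ : MemLp g₂ 2 μ) :
    ∫ ω, (f₁ ω - f₂ ω) * star (g₁ ω - g₂ ω) ∂μ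
      = ∫ ω, f₁ ω * star (g₁ ω) ∂μ - ∫ ω, f₁ ω * star (g₂ ω) ∂μ
        - ∫ ω, f₂ ω * star (g₁ ω) ∂μ + ∫ ω, f₂ ω * star (g₂ ω) ∂μ := by
  have h₁₁ := hf₁.integrable_mul_star hg₁
  have h₁₂ := hf₁.integrable_mul_star hg₂
  have h₂₁ := hf₂.integrable_mul_star hg₁
  have h₂₂ := hf₂.integrable_mul_star hg₂
  have h₁ : Integrable (fun ω => f₁ ω * star (g₁ ω) - f₁ ω * star (g₂ ω)) μ := h₁₁.sub h₁₂
  have h₂ : Integrable (fun ω => f₂ ω * star (g₁ ω) - f₂ ω * star (g₂ ω)) μ := h₂₁.sub h₂₂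
  have hexpand : ∀ ω, (f₁ ω - f₂ ω) * star (g₁ ω - g₂ ω)
      = (f₁ ω * star (g₁ ω) - f₁ ω * star (g₂ ω))
        - (f₂ ω * star (g₁ ω) - f₂ ω * star (g₂ ω)) := by
    intro ω; rw [star_sub]; ring
  simp_rw [hexpand]
  rw [integral_sub h₁ h₂, integral_sub h₁₁ h₁₂, integral_sub h₂₁ h₂₂]
  ring

lemma integral_sub_mean_mul_star_sub_mean [IsProbabilityMeasure μ] {f g : Ω → 𝕜}
    (hf : MemLp f 2 μ) (hg : MemLp g 2 μ) :
    ∫ ω, (f ω - ∫ ω', f ω' ∂μ) * star (g ω - ∫ ω', g ω' ∂μ) ∂μ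
      = ∫ ω, f ω * star (g ω) ∂μ - (∫ ω, f ω ∂μ) * star (∫ ω, g ω ∂μ) := by
  rw [integral_sub_mul_star_sub hf (memLp_const _) hg (memLp_const _), integral_mul_const,
    integral_const_mul, integral_star, integral_const, probReal_univ, one_smul]
  ring

lemma Matrix.measurable_entry {α : Type*} [MeasurableSpace α] (p : ι) (i : κ) :
    Measurable fun M : Matrix ι κ α => M p i :=
  (measurable_pi_apply i).comp (measurable_pi_apply p)

lemma Matrix.measurable_mulVec [Fintype κ] :
    Measurable fun z : Matrix ι κ 𝕜 × (κ → 𝕜) => z.1 *ᵥ z.2 :=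
  measurable_pi_lambda _ fun p => Finset.measurable_sum _ fun i _ =>
    ((measurable_entry p i).comp measurable_fst).mul ((measurable_pi_apply i).comp measurable_snd)

noncomputable def meanVec (μ : Measure Ω) (u : Ω → ι → 𝕜) : ι → 𝕜 := fun p => ∫ ω, u ω p ∂μ

noncomputable def meanMatrix (μ : Measure Ω) (A : Ω → Matrix ι κ 𝕜) : Matrix ι κ 𝕜 :=
  of fun p i => ∫ ω, A ω p i ∂μ

noncomputable def secondMoment (μ : Measure Ω) (u : Ω → ι → 𝕜) : Matrix ι ι 𝕜 :=
  of fun p q => ∫ ω, u ω p * star (u ω q) ∂μ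

noncomputable def covMatrix (μ : Measure Ω) (u : Ω → ι → 𝕜) : Matrix ι ι 𝕜 :=
  of fun p q => ∫ ω, (u ω p - meanVec μ u p) * star (u ω q - meanVec μ u q) ∂μ

lemma ProbabilityTheory.IndepFun.integral_apply_mul_star_apply {u v : Ω → ι → 𝕜}
    (huv : IndepFun u v μ) (hu : ∀ p, AEStronglyMeasurable (fun ω => u ω p) μ)
    (hv : ∀ q, AEStronglyMeasurable (fun ω => v ω q) μ) (p q : ι) :
    ∫ ω, u ω p * star (v ω q) ∂μ = meanVec μ u p * star (meanVec μ v q) :=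
  (huv.comp (measurable_pi_apply p) (measurable_pi_apply q)).integral_mul_star (hu p) (hv q)

lemma secondMoment_eq_covMatrix_add [IsProbabilityMeasure μ] {u : Ω → ι → 𝕜}
    (hu : ∀ p, MemLp (fun ω => u ω p) 2 μ) :
    secondMoment μ u = covMatrix μ u + vecMulVec (meanVec μ u) (star (meanVec μ u)) := by
  ext p q
  simp only [secondMoment, covMatrix, meanVec, of_apply, Matrix.add_apply, vecMulVec_apply,
    Pi.star_apply]
  rw [integral_sub_mean_mul_star_sub_mean (hu p) (hu q)]
  ring

lemma secondMoment_sub_of_indepFun {y u : Ω → ι → 𝕜} (hyu : IndepFun y u μ)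
    (hy : ∀ p, MemLp (fun ω => y ω p) 2 μ) (hu : ∀ p, MemLp (fun ω => u ω p) 2 μ) :
    secondMoment μ (fun ω => y ω - u ω)
      = secondMoment μ y - vecMulVec (meanVec μ y) (star (meanVec μ u))
        - vecMulVec (meanVec μ u) (star (meanVec μ y)) + secondMoment μ u := by
  ext p q
  simp only [secondMoment, of_apply, Pi.sub_apply, Matrix.add_apply, Matrix.sub_apply,
    vecMulVec_apply, Pi.star_apply]
  rw [integral_sub_mul_star_sub (hy p) (hu p) (hy q) (hu q),
    hyu.integral_apply_mul_star_apply (fun p => (hy p).1) (fun q => (hu q).1),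
    hyu.symm.integral_apply_mul_star_apply (fun p => (hu p).1) (fun q => (hy q).1)]

lemma meanVec_mulVec_of_indepFun [Fintype κ] {A : Ω → Matrix ι κ 𝕜} {x : Ω → κ → 𝕜}
    (hAx : IndepFun A x μ) (hA : ∀ p i, Integrable (fun ω => A ω p i) μ)
    (hx : ∀ i, Integrable (fun ω => x ω i) μ) :
    meanVec μ (fun ω => A ω *ᵥ x ω) = meanMatrix μ A *ᵥ meanVec μ x := by
  ext p
  have hentry : ∀ i, IndepFun (fun ω => A ω p i) (fun ω => x ω i) μ :=
    fun i => hAx.comp (measurable_entry p i) (measurable_pi_apply i)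
  have hint : ∀ i, Integrable (fun ω => A ω p i * x ω i) μ :=
    fun i => (hentry i).integrable_mul (hA p i) (hx i)
  simp only [meanVec, meanMatrix, mulVec, dotProduct, of_apply]
  rw [integral_finsetSum _ fun i _ => hint i]
  exact Finset.sum_congr rfl fun i _ =>
    (hentry i).integral_fun_mul_eq_mul_integral (hA p i).1 (hx i).1

lemma memLp_mulVec_of_indepFun [Fintype κ] {A : Ω → Matrix ι κ 𝕜} {x : Ω → κ → 𝕜}
    (hAx : IndepFun A x μ) (hA : ∀ p i, MemLp (fun ω => A ω p i) 2 μ)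
    (hx : ∀ i, MemLp (fun ω => x ω i) 2 μ) (p : ι) :
    MemLp (fun ω => (A ω *ᵥ x ω) p) 2 μ :=
  memLp_finsetSum _ fun i _ =>
    (hAx.comp (measurable_entry p i) (measurable_pi_apply i)).memLp_two_mul (hA p i) (hx i)

section IndependentColumns

variable [IsProbabilityMeasure μ] [DecidableEq κ] {A : Ω → Matrix ι κ 𝕜}
  (hcols : iIndepFun (fun i ω p => A ω p i) μ) (hA : ∀ p i, MemLp (fun ω => A ω p i) 2 μ)
include hcols hA

lemma integral_mul_star_of_iIndepFun_cols (p q : ι) (i j : κ) :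
    ∫ ω, A ω p i * star (A ω q j) ∂μ
      = meanMatrix μ A p i * star (meanMatrix μ A q j)
        + if i = j then covMatrix μ (fun ω p => A ω p i) p q else 0 := by
  by_cases hij : i = j
  · subst hij
    rw [if_pos rfl, add_comm]
    exact congrFun₂ (secondMoment_eq_covMatrix_add fun p => hA p i) p q
  · rw [if_neg hij, add_zero]
    exact (hcols.indepFun hij).integral_apply_mul_star_apply (fun p => (hA p i).1)
      (fun q => (hA q j).1) p q

lemma secondMoment_mulVec_of_indepFun [Fintype κ] {x : Ω → κ → 𝕜} (hAx : IndepFun A x μ)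
    (hx : ∀ i, MemLp (fun ω => x ω i) 2 μ) :
    secondMoment μ (fun ω => A ω *ᵥ x ω)
      = meanMatrix μ A * secondMoment μ x * (meanMatrix μ A)ᴴ
        + ∑ i, secondMoment μ x i i • covMatrix μ (fun ω p => A ω p i) := by
  ext p q
  have hind : ∀ i j, IndepFun (fun ω => A ω p i * star (A ω q j))
      (fun ω => x ω i * star (x ω j)) μ := fun i j =>
    hAx.comp (φ := fun M : Matrix ι κ 𝕜 => M p i * star (M q j))
      (ψ := fun v : κ → 𝕜 => v i * star (v j))
      ((measurable_entry p i).mul (continuous_star.measurable.comp (measurable_entry q j)))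
      ((measurable_pi_apply i).mul (continuous_star.measurable.comp (measurable_pi_apply j)))
  have hsplit : ∀ ω i j, A ω p i * x ω i * star (A ω q j * x ω j)
      = A ω p i * star (A ω q j) * (x ω i * star (x ω j)) := by
    intro ω i j; rw [star_mul']; ring
  have hint : ∀ i j, Integrable (fun ω => A ω p i * x ω i * star (A ω q j * x ω j)) μ := by
    intro i j
    simp_rw [hsplit]
    exact (hind i j).integrable_mul ((hA p i).integrable_mul_star (hA q j))
      ((hx i).integrable_mul_star (hx j))
  calc secondMoment μ (fun ω => A ω *ᵥ x ω) p q
      = ∑ i, ∑ j, ∫ ω, A ω p i * x ω i * star (A ω q j * x ω j) ∂μ := by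
        simp only [secondMoment, of_apply, mulVec, dotProduct, star_sum, Finset.sum_mul_sum]
        rw [integral_finsetSum _ fun i _ => integrable_finsetSum _ fun j _ => hint i j]
        exact Finset.sum_congr rfl fun i _ => integral_finsetSum _ fun j _ => hint i j
    _ = ∑ i, ∑ j, (meanMatrix μ A p i * star (meanMatrix μ A q j)
          + if i = j then covMatrix μ (fun ω p => A ω p i) p q else 0) * secondMoment μ x i j := by
        refine Finset.sum_congr rfl fun i _ => Finset.sum_congr rfl fun j _ => ?_
        simp_rw [hsplit]
        rw [(hind i j).integral_fun_mul_eq_mul_integral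
            ((hA p i).integrable_mul_star (hA q j)).1 ((hx i).integrable_mul_star (hx j)).1,
          integral_mul_star_of_iIndepFun_cols hcols hA]
        rfl
    _ = _ := by
        simp only [add_mul, ite_mul, zero_mul, Finset.sum_add_distrib, Finset.sum_ite_eq,
          Finset.mem_univ, if_true, mul_apply, conjTranspose_apply, Matrix.add_apply,
          Matrix.sum_apply, Matrix.smul_apply, smul_eq_mul, Finset.sum_mul]
        congr 1
        · rw [Finset.sum_comm]
          exact Finset.sum_congr rfl fun j _ => Finset.sum_congr rfl fun i _ => by ring
        · simp only [mul_comm]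

end IndependentColumns

lemma secondMoment_residual [IsProbabilityMeasure μ] [Fintype κ] [DecidableEq κ]
    {A : Ω → Matrix ι κ 𝕜} {y : Ω → ι → 𝕜} {x : Ω → κ → 𝕜} (hAx : IndepFun A x μ)
    (hAxy : IndepFun (fun ω => (A ω, x ω)) y μ) (hcols : iIndepFun (fun i ω p => A ω p i) μ)
    (hA : ∀ p i, MemLp (fun ω => A ω p i) 2 μ) (hy : ∀ p, MemLp (fun ω => y ω p) 2 μ)
    (hx : ∀ i, MemLp (fun ω => x ω i) 2 μ) :
    secondMoment μ (fun ω => y ω - A ω *ᵥ x ω)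
      = vecMulVec (meanVec μ y - meanMatrix μ A *ᵥ meanVec μ x)
          (star (meanVec μ y - meanMatrix μ A *ᵥ meanVec μ x))
        + covMatrix μ y + meanMatrix μ A * covMatrix μ x * (meanMatrix μ A)ᴴ
        + ∑ i, (covMatrix μ x i i + meanVec μ x i * star (meanVec μ x i))
          • covMatrix μ (fun ω p => A ω p i) := by
  have hyAx : IndepFun y (fun ω => A ω *ᵥ x ω) μ := (hAxy.comp measurable_mulVec measurable_id).symm
  rw [secondMoment_sub_of_indepFun hyAx hy (memLp_mulVec_of_indepFun hAx hA hx),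
    meanVec_mulVec_of_indepFun hAx (fun p i => (hA p i).integrable one_le_two)
      (fun i => (hx i).integrable one_le_two),
    secondMoment_mulVec_of_indepFun hcols hA hAx hx, secondMoment_eq_covMatrix_add hy,
    secondMoment_eq_covMatrix_add hx]
  simp only [Matrix.add_apply, vecMulVec_apply, Pi.star_apply, Matrix.mul_add, Matrix.add_mul,
    mul_vecMulVec, vecMulVec_mul, vecMulVec_sub, sub_vecMulVec, star_sub, ← star_mulVec]
  abel

lemma dotProduct_star_mulVec_eq_trace [Fintype ι] (B : Matrix ι ι 𝕜) (v : ι → 𝕜) :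
    star v ⬝ᵥ (B *ᵥ v) = trace (B * vecMulVec v (star v)) := by
  rw [mul_vecMulVec, trace_vecMulVec, dotProduct_comm]

lemma integral_dotProduct_star_mulVec [Fintype ι] (B : Matrix ι ι 𝕜) {r : Ω → ι → 𝕜}
    (hr : ∀ p, MemLp (fun ω => r ω p) 2 μ) :
    ∫ ω, star (r ω) ⬝ᵥ (B *ᵥ r ω) ∂μ = trace (B * secondMoment μ r) := by
  have hint : ∀ p q, Integrable (fun ω => B p q * (r ω q * star (r ω p))) μ :=
    fun p q => ((hr q).integrable_mul_star (hr p)).const_mul _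
  simp only [dotProduct_star_mulVec_eq_trace, trace, diag, mul_apply, vecMulVec_apply,
    secondMoment, of_apply, Pi.star_apply]
  rw [integral_finsetSum _ fun p _ => integrable_finsetSum _ fun q _ => hint p q]
  refine Finset.sum_congr rfl fun p _ => ?_
  rw [integral_finsetSum _ fun q _ => hint p q]
  exact Finset.sum_congr rfl fun q _ => integral_const_mul _ _

lemma trace_mul_residual_moment [Fintype ι] [Fintype κ] [DecidableEq κ] (B : Matrix ι ι 𝕜)
    (M : Matrix ι κ 𝕜) (c : ι → 𝕜) (m : κ → 𝕜) (Sa : κ → Matrix ι ι 𝕜) (Sy : Matrix ι ι 𝕜)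
    (Sx : Matrix κ κ 𝕜) :
    trace (B * (vecMulVec c (star c) + Sy + M * Sx * Mᴴ
      + ∑ i, (Sx i i + m i * star (m i)) • Sa i))
      = star c ⬝ᵥ (B *ᵥ c) + (B * Sy).trace
        + star m ⬝ᵥ (diagonal (fun i => (B * Sa i).trace) *ᵥ m)
        + (Sx * diagonal fun i => (B * Sa i).trace).trace + (Sx * (Mᴴ * B * M)).trace := by
  have hM : trace (B * (M * Sx * Mᴴ)) = trace (Sx * (Mᴴ * B * M)) := by
    rw [trace_mul_comm Sx, ← Matrix.mul_assoc, trace_mul_cycle, ← Matrix.mul_assoc]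
  have hD : ∑ i, (Sx i i + m i * star (m i)) * trace (B * Sa i)
      = star m ⬝ᵥ (diagonal (fun i => (B * Sa i).trace) *ᵥ m)
        + (Sx * diagonal fun i => (B * Sa i).trace).trace := by
    simp only [dotProduct, mulVec_diagonal, trace, diag, mul_diagonal, Pi.star_apply,
      ← Finset.sum_add_distrib]
    exact Finset.sum_congr rfl fun i _ => by ring
  simp only [Matrix.mul_add, trace_add, Matrix.mul_sum, trace_sum, Matrix.mul_smul, trace_smul,
    smul_eq_mul, ← dotProduct_star_mulVec_eq_trace, hM, hD]
  ring

end

theorem expectation_residual_quadratic_form_general {m n : ℕ} {Ω : Type*} [MeasurableSpace Ω]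
    (P : Measure Ω) [IsProbabilityMeasure P]
    (A : Ω → Matrix (Fin m) (Fin n) ℂ) (y : Ω → Fin m → ℂ) (x : Ω → Fin n → ℂ)
    (hA2 : ∀ p i, MemLp (fun ω => A ω p i) 2 P)
    (hy2 : ∀ p, MemLp (fun ω => y ω p) 2 P)
    (hx2 : ∀ i, MemLp (fun ω => x ω i) 2 P)
    (hIndep : iIndep
      ![MeasurableSpace.comap A inferInstance, MeasurableSpace.comap y inferInstance,
        MeasurableSpace.comap x inferInstance] P)
    (hcols : iIndepFun
      (fun i : Fin n => fun ω p => A ω p i) P)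
    (B : Matrix (Fin m) (Fin m) ℂ)
    (mA : Matrix (Fin m) (Fin n) ℂ) (hmA : mA = Matrix.of fun p i => ∫ ω, A ω p i ∂P)
    (my : Fin m → ℂ) (hmy : my = fun p => ∫ ω, y ω p ∂P)
    (mx : Fin n → ℂ) (hmx : mx = fun i => ∫ ω, x ω i ∂P)
    (Sa : Fin n → Matrix (Fin m) (Fin m) ℂ)
    (hSa : ∀ i, Sa i = Matrix.of fun p q =>
      ∫ ω, (A ω p i - mA p i) * star (A ω q i - mA q i) ∂P)
    (Sy : Matrix (Fin m) (Fin m) ℂ)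
    (hSy : Sy = Matrix.of fun p q => ∫ ω, (y ω p - my p) * star (y ω q - my q) ∂P)
    (Sx : Matrix (Fin n) (Fin n) ℂ)
    (hSx : Sx = Matrix.of fun i j => ∫ ω, (x ω i - mx i) * star (x ω j - mx j) ∂P)
    (D : Matrix (Fin n) (Fin n) ℂ) (hD : D = Matrix.diagonal fun i => (B * Sa i).trace) :
    ∫ ω, star (y ω - A ω *ᵥ x ω) ⬝ᵥ (B *ᵥ (y ω - A ω *ᵥ x ω)) ∂P =
      star (my - mA *ᵥ mx) ⬝ᵥ (B *ᵥ (my - mA *ᵥ mx)) + (B * Sy).trace +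
        star mx ⬝ᵥ (D *ᵥ mx) + (Sx * D).trace + (Sx * (mAᴴ * B * mA)).trace := by
  obtain rfl : mA = meanMatrix P A := hmA
  obtain rfl : my = meanVec P y := hmy
  obtain rfl : mx = meanVec P x := hmx
  obtain rfl : Sa = fun i => covMatrix P fun ω p => A ω p i := funext hSa
  obtain rfl : Sy = covMatrix P y := hSy
  obtain rfl : Sx = covMatrix P x := hSx
  subst hD
  have hAx : IndepFun A x P := hIndep.indep (i := 0) (j := 2) (by decide)
  have hAxy : IndepFun (fun ω => (A ω, x ω)) y P :=
    indepFun_prodMk_of_iIndep_comap hIndep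
      (aemeasurable_pi_lambda _ fun p => aemeasurable_pi_lambda _ fun i => (hA2 p i).1.aemeasurable)
      (aemeasurable_pi_lambda _ fun p => (hy2 p).1.aemeasurable)
      (aemeasurable_pi_lambda _ fun i => (hx2 i).1.aemeasurable)
  have hr : ∀ p, MemLp (fun ω => (y ω - A ω *ᵥ x ω) p) 2 P :=
    fun p => (hy2 p).sub (memLp_mulVec_of_indepFun hAx hA2 hx2 p)
  rw [integral_dotProduct_star_mulVec B hr, secondMoment_residual hAx hAxy hcols hA2 hy2 hx2,
    trace_mul_residual_moment]

/-- Theorem 1: for mutually independent `A`, `y`, `x` (with the columns of `A` also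
mutually independent) with square-integrable entries, and a Hermitian matrix `B`,
`E[(y − Ax)^H B (y − Ax)] = (⟨y⟩ − ⟨A⟩⟨x⟩)^H B (⟨y⟩ − ⟨A⟩⟨x⟩) + Tr(B Σ_y)
  + ⟨x⟩^H D ⟨x⟩ + Tr(Σ_x D) + Tr(Σ_x ⟨A⟩^H B ⟨A⟩)`,
where `D = diag(Tr(B Σ_{a_1}), …, Tr(B Σ_{a_n}))`. -/
theorem expectation_residual_quadratic_form {m n : ℕ} {Ω : Type*} [MeasurableSpace Ω]
    (P : Measure Ω) [IsProbabilityMeasure P]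
    (A : Ω → Matrix (Fin m) (Fin n) ℂ) (y : Ω → Fin m → ℂ) (x : Ω → Fin n → ℂ)
    (hA2 : ∀ p i, MemLp (fun ω => A ω p i) 2 P)
    (hy2 : ∀ p, MemLp (fun ω => y ω p) 2 P)
    (hx2 : ∀ i, MemLp (fun ω => x ω i) 2 P)
    (hIndep : iIndep
      ![MeasurableSpace.comap A inferInstance, MeasurableSpace.comap y inferInstance,
        MeasurableSpace.comap x inferInstance] P)
    (hcols : iIndepFun
      (fun i : Fin n => fun ω p => A ω p i) P)
    (B : Matrix (Fin m) (Fin m) ℂ) (hB : B.IsHermitian)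
    (mA : Matrix (Fin m) (Fin n) ℂ) (hmA : mA = Matrix.of fun p i => ∫ ω, A ω p i ∂P)
    (my : Fin m → ℂ) (hmy : my = fun p => ∫ ω, y ω p ∂P)
    (mx : Fin n → ℂ) (hmx : mx = fun i => ∫ ω, x ω i ∂P)
    (Sa : Fin n → Matrix (Fin m) (Fin m) ℂ)
    (hSa : ∀ i, Sa i = Matrix.of fun p q =>
      ∫ ω, (A ω p i - mA p i) * star (A ω q i - mA q i) ∂P)
    (Sy : Matrix (Fin m) (Fin m) ℂ)
    (hSy : Sy = Matrix.of fun p q => ∫ ω, (y ω p - my p) * star (y ω q - my q) ∂P)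
    (Sx : Matrix (Fin n) (Fin n) ℂ)
    (hSx : Sx = Matrix.of fun i j => ∫ ω, (x ω i - mx i) * star (x ω j - mx j) ∂P)
    (D : Matrix (Fin n) (Fin n) ℂ) (hD : D = Matrix.diagonal fun i => (B * Sa i).trace) :
    ∫ ω, star (y ω - A ω *ᵥ x ω) ⬝ᵥ (B *ᵥ (y ω - A ω *ᵥ x ω)) ∂P =
      star (my - mA *ᵥ mx) ⬝ᵥ (B *ᵥ (my - mA *ᵥ mx)) + (B * Sy).trace +
        star mx ⬝ᵥ (D *ᵥ mx) + (Sx * D).trace + (Sx * (mAᴴ * B * mA)).trace :=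
  expectation_residual_quadratic_form_general P A y x hA2 hy2 hx2 hIndep hcols B mA hmA my hmy mx
    hmx Sa hSa Sy hSy Sx hSx D hD
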